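/- Let n ≥ 2 and r > 0. Then the origin (0, 0, 0, 0, 0) of ℝ × ℝⁿ × ℝⁿ × Mₙ⁰ × ℝ belongs to U(r); in particular U(r) is a nonempty open set. -/

import Mathlib

open scoped BigOperators
open MeasureTheory

noncomputable section

/-- The Euclidean norm of a vector in `ℝ^m` (coordinates indexed by `Fin m`). -/
def eNorm {m : ℕ} (v : Fin m → ℝ) : ℝ := Real.sqrt (∑ i, v i ^ 2)

/-- `Mₙ⁰`: the submodule of symmetric trace-free `n × n` real matrices. -/
def M0 (n : ℕ) : Submodule ℝ (Matrix (Fin n) (Fin n) ℝ) where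
  carrier := {A | A.IsSymm ∧ A.trace = 0}
  add_mem' := fun ha hb => ⟨ha.1.add hb.1, by rw [Matrix.trace_add, ha.2, hb.2, add_zero]⟩
  zero_mem' := ⟨Matrix.isSymm_zero, Matrix.trace_zero ..⟩
  smul_mem' := fun c _ hA => ⟨hA.1.smul c, by rw [Matrix.trace_smul, hA.2, smul_zero]⟩

/-- The constraint set `K(r) ⊆ ℝ × ℝⁿ × ℝⁿ × Mₙ⁰`:
tuples `(b̃, η̃, ṽ, z̃)` with `b̃ ∈ {−1,1}`, `|ṽ| = r`, `η̃ = b̃ ṽ` and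
`z̃ = ṽ ⊗ ṽ − (|ṽ|²/n) Iₙ`. -/
def Ksp (n : ℕ) (r : ℝ) : Set (ℝ × (Fin n → ℝ) × (Fin n → ℝ) × M0 n) :=
  {p | (p.1 = 1 ∨ p.1 = -1) ∧ eNorm p.2.2.1 = r ∧ p.2.1 = p.1 • p.2.2.1 ∧
    (p.2.2.2 : Matrix (Fin n) (Fin n) ℝ) =
      Matrix.vecMulVec p.2.2.1 p.2.2.1 - ((eNorm p.2.2.1 ^ 2) / n) • (1 : Matrix (Fin n) (Fin n) ℝ)}

/-- `U(r)`: the interior of `convexHull (K(r)) × [−1,1]` in `ℝ × ℝⁿ × ℝⁿ × Mₙ⁰ × ℝ`. -/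
def Usp (n : ℕ) (r : ℝ) : Set ((ℝ × (Fin n → ℝ) × (Fin n → ℝ) × M0 n) × ℝ) :=
  interior ((convexHull ℝ (Ksp n r)) ×ˢ Set.Icc (-1 : ℝ) 1)

/-!
`K(r)` contains the finite family of points `(b, b s w, s w, w ⊗ w - (r²/n) Iₙ)` with `b, s = ±1`
and `w` running over `r eᵢ` and `r (eᵢ ± eⱼ)/√2`. Character sums over the signs `(b, s)` isolate
each of the four components, so the family spans `ℝ × ℝⁿ × ℝⁿ × Mₙ⁰`: the `eᵢ` span `ℝⁿ`, and the
matrices `w ⊗ w` span the symmetric matrices, hence their traceless parts span `Mₙ⁰`. By the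
parallelogram law the family sums to zero. A spanning finite family with zero sum has `0` in the
interior of its convex hull, because `t ↦ ∑ tᵢ fᵢ` is an open map and, near `t = 0`, shifting all
weights by a common constant turns `∑ tᵢ fᵢ` into a convex combination of the `fᵢ`.
-/

open Matrix Set Submodule

theorem zero_mem_interior_convexHull_of_sum_eq_zero {E ι : Type*} [AddCommGroup E] [Module ℝ E]
    [TopologicalSpace E] [IsTopologicalAddGroup E] [ContinuousSMul ℝ E] [T2Space E]
    [FiniteDimensional ℝ E] [Fintype ι] [Nonempty ι] {f : ι → E}
    (hspan : span ℝ (range f) = ⊤) (hsum : ∑ i, f i = 0) :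
    (0 : E) ∈ interior (convexHull ℝ (range f)) := by
  set N : ℝ := (Fintype.card ι : ℝ)
  have hN : 0 < N := by positivity
  let φ := Fintype.linearCombination ℝ f
  have hφ : Function.Surjective φ := by
    rw [← LinearMap.range_eq_top, Fintype.range_linearCombination, hspan]
  -- shifting all coefficients by a common constant does not change `φ t`, since `∑ i, f i = 0`
  let w : (ι → ℝ) → ι → ℝ := fun t i => t i + (1 - ∑ j, t j) / N
  let V : Set (ι → ℝ) := ⋂ i, {t | 0 < w t i}
  have hV : IsOpen V := isOpen_iInter_of_finite fun i => isOpen_lt continuous_const (by fun_prop)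
  have h0V : (0 : ι → ℝ) ∈ V := mem_iInter.2 fun i => by simp [w, hN]
  have hVC : φ '' V ⊆ convexHull ℝ (range f) := by
    rintro _ ⟨t, ht, rfl⟩
    have hφt : φ t = ∑ i, w t i • f i := by
      simp only [φ, Fintype.linearCombination_apply, w, add_smul, Finset.sum_add_distrib,
        ← Finset.smul_sum, hsum, smul_zero, add_zero]
    have hw1 : ∑ i, w t i = 1 := by
      simp only [w, Finset.sum_add_distrib, Finset.sum_const, Finset.card_univ, nsmul_eq_mul]
      field_simp
      ring
    rw [hφt]
    exact (convex_convexHull ℝ _).sum_mem (fun i _ => (mem_iInter.1 ht i).le) hw1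
      fun i _ => subset_convexHull ℝ _ (mem_range_self i)
  exact interior_mono hVC (mem_interior.2 ⟨_, subset_rfl,
    LinearMap.isOpenMap_of_finiteDimensional φ hφ V hV, 0, h0V, map_zero φ⟩)

lemma apply_mem_of_span_eq_top {R M N : Type*} [Semiring R] [AddCommMonoid M] [Module R M]
    [AddCommMonoid N] [Module R N] (L : M →ₗ[R] N) {s : Set M} (hs : span R s = ⊤)
    {P : Submodule R N} (h : ∀ x ∈ s, L x ∈ P) (x : M) : L x ∈ P := by
  have hle : span R s ≤ P.comap L := span_le.2 h
  rw [hs] at hle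
  exact hle trivial

lemma eq_sum_smul_single_add_single_of_isSymm {m : Type*} [Fintype m] [DecidableEq m]
    {A : Matrix m m ℝ} (hA : A.IsSymm) :
    A = ∑ i, ∑ j, (A i j / 2) • (single i j 1 + single j i 1) := by
  ext k l
  simp [Matrix.sum_apply, single_apply, Finset.sum_add_distrib, ite_and, hA.apply k l]

lemma eq_sum_of_isSymm_of_trace_eq_zero {n : ℕ} {A : Matrix (Fin n) (Fin n) ℝ} (hA : A.IsSymm)
    (htr : A.trace = 0) :
    A = ∑ i, ∑ j, (A i j / 2) •
      (single i j 1 + single j i 1 - (if i = j then (2 / n : ℝ) else 0) • 1) := by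
  have htr' : ∑ i, A i i = 0 := htr
  have hdiag : ∑ i, ∑ j, (A i j / 2) • (if i = j then (2 / n : ℝ) else 0) •
      (1 : Matrix (Fin n) (Fin n) ℝ) = 0 := by
    simp [smul_smul, ← Finset.sum_smul, ← Finset.sum_mul, ← Finset.sum_div, htr']
  simp_rw [smul_sub, Finset.sum_sub_distrib, hdiag, sub_zero]
  exact eq_sum_smul_single_add_single_of_isSymm hA

section EuclideanNorm

variable {m : ℕ}

lemma eNorm_sq (v : Fin m → ℝ) : eNorm v ^ 2 = v ⬝ᵥ v := by
  rw [eNorm, Real.sq_sqrt (by positivity)]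
  simp [dotProduct, sq]

lemma eNorm_eq_of_dotProduct_self {v : Fin m → ℝ} {r : ℝ} (hr : 0 ≤ r) (h : v ⬝ᵥ v = r ^ 2) :
    eNorm v = r := by
  rw [eNorm, Real.sqrt_eq_iff_eq_sq (by positivity) hr, ← h]
  simp [dotProduct, sq]

lemma eNorm_neg (v : Fin m → ℝ) : eNorm (-v) = eNorm v := by
  simp [eNorm]

end EuclideanNorm

def boolSign (b : Bool) : ℝ := if b then 1 else -1

lemma boolSign_eq_one_or_eq_neg_one (b : Bool) : boolSign b = 1 ∨ boolSign b = -1 := by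
  cases b <;> simp [boolSign]

lemma boolSign_mul_self (b : Bool) : boolSign b * boolSign b = 1 := by
  cases b <;> simp [boolSign]

lemma eNorm_boolSign_smul {m : ℕ} (b : Bool) (v : Fin m → ℝ) :
    eNorm (boolSign b • v) = eNorm v := by
  cases b <;> simp [boolSign, eNorm_neg]

section TracelessSquare

variable {n : ℕ}

lemma vecMulVec_self_sub_mem_M0 (v : Fin n → ℝ) :
    vecMulVec v v - (eNorm v ^ 2 / n) • (1 : Matrix (Fin n) (Fin n) ℝ) ∈ M0 n := by
  refine ⟨(show (vecMulVec v v).IsSymm from transpose_vecMulVec v v).sub (isSymm_one.smul _), ?_⟩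
  rcases Nat.eq_zero_or_pos n with rfl | hn
  · simp [trace]
  · rw [trace_sub, trace_smul, trace_one, trace_vecMulVec, eNorm_sq, Fintype.card_fin,
      smul_eq_mul, div_mul_cancel₀ _ (by positivity), sub_self]

def tracelessSq (v : Fin n → ℝ) : M0 n := ⟨_, vecMulVec_self_sub_mem_M0 v⟩

lemma coe_tracelessSq (v : Fin n → ℝ) :
    (tracelessSq v : Matrix (Fin n) (Fin n) ℝ) = vecMulVec v v - (eNorm v ^ 2 / n) • 1 :=
  rfl

lemma coe_tracelessSq_of_eNorm_eq {r : ℝ} {v : Fin n → ℝ} (hv : eNorm v = r) :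
    (tracelessSq v : Matrix (Fin n) (Fin n) ℝ) = vecMulVec v v - (r ^ 2 / n) • 1 := by
  rw [coe_tracelessSq, hv]

lemma tracelessSq_neg (v : Fin n → ℝ) : tracelessSq (-v) = tracelessSq v := by
  ext1
  simp [coe_tracelessSq_of_eNorm_eq (eNorm_neg v), coe_tracelessSq]

lemma coe_tracelessSq_smul_single (r : ℝ) (i : Fin n) :
    (tracelessSq (r • Pi.single i 1) : Matrix (Fin n) (Fin n) ℝ) =
      r ^ 2 • single i i 1 - (r ^ 2 / n) • 1 := by
  have h : eNorm (r • Pi.single i 1 : Fin n → ℝ) ^ 2 = r ^ 2 := by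
    rw [eNorm_sq]
    simp [sq]
  rw [coe_tracelessSq, h, single_eq_single_vecMulVec_single, smul_vecMulVec, vecMulVec_smul,
    smul_smul, sq]

lemma sum_tracelessSq_smul_single (r : ℝ) :
    ∑ i : Fin n, tracelessSq (r • Pi.single i 1 : Fin n → ℝ) = 0 := by
  rcases eq_or_ne n 0 with rfl | hn
  · simp
  ext1
  simp only [Submodule.coe_sum, coe_tracelessSq_smul_single, Finset.sum_sub_distrib,
    ← Finset.smul_sum, sum_single_one, Finset.sum_const, Finset.card_univ, Fintype.card_fin,
    ← Nat.cast_smul_eq_nsmul ℝ, smul_smul]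
  rw [div_mul_cancel₀ _ (Nat.cast_ne_zero.2 hn), sub_self, ZeroMemClass.coe_zero]

end TracelessSquare

section KPoints

variable {n : ℕ}

def kPoint (b : ℝ) (v : Fin n → ℝ) : ℝ × (Fin n → ℝ) × (Fin n → ℝ) × M0 n :=
  (b, b • v, v, tracelessSq v)

lemma kPoint_mem_Ksp {r b : ℝ} {v : Fin n → ℝ} (hb : b = 1 ∨ b = -1) (hv : eNorm v = r) :
    kPoint b v ∈ Ksp n r :=
  ⟨hb, hv, rfl, rfl⟩

lemma sum_kPoint_signs (v : Fin n → ℝ) :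
    ∑ q : Bool × Bool, kPoint (boolSign q.1) (boolSign q.2 • v) =
      (0, 0, 0, (4 : ℝ) • tracelessSq v) := by
  simp only [Fintype.sum_prod_type, Fintype.sum_bool, boolSign, if_true, Bool.false_eq_true,
    if_false, one_smul, neg_smul, kPoint, tracelessSq_neg, Prod.mk_add_mk, Prod.mk.injEq]
  refine ⟨?_, ?_, ?_, ?_⟩ <;> module

lemma mem_of_kPoint_signs_mem {P : Submodule ℝ (ℝ × (Fin n → ℝ) × (Fin n → ℝ) × M0 n)}
    {v : Fin n → ℝ} (hP : ∀ b s : Bool, kPoint (boolSign b) (boolSign s • v) ∈ P) :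
    ((1 : ℝ), (0 : Fin n → ℝ), (0 : Fin n → ℝ), (0 : M0 n)) ∈ P ∧
    ((0 : ℝ), v, (0 : Fin n → ℝ), (0 : M0 n)) ∈ P ∧
    ((0 : ℝ), (0 : Fin n → ℝ), v, (0 : M0 n)) ∈ P ∧
    ((0 : ℝ), (0 : Fin n → ℝ), (0 : Fin n → ℝ), tracelessSq v) ∈ P := by
  simp only [kPoint, boolSign, ite_smul, one_smul, neg_smul, smul_ite, smul_neg, Bool.forall_bool,
    Bool.false_eq_true, ↓reduceIte, tracelessSq_neg, neg_neg] at hP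
  obtain ⟨⟨hff, hft⟩, htf, htt⟩ := hP
  refine ⟨?_, ?_, ?_, ?_⟩ <;> [
    convert P.smul_mem (1/4 : ℝ) (P.sub_mem (P.add_mem htt htf) (P.add_mem hft hff)) using 1;
    convert P.smul_mem (1/4 : ℝ) (P.add_mem (P.sub_mem htt htf) (P.sub_mem hff hft)) using 1;
    convert P.smul_mem (1/4 : ℝ) (P.add_mem (P.sub_mem htt htf) (P.sub_mem hft hff)) using 1;
    convert P.smul_mem (1/4 : ℝ) (P.add_mem (P.add_mem htt htf) (P.add_mem hft hff)) using 1] <;>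
  · simp only [Prod.mk_add_mk, Prod.mk_sub_mk, Prod.smul_mk, Prod.mk.injEq]
    refine ⟨?_, ?_, ?_, ?_⟩ <;> module

end KPoints

section Directions

variable {n : ℕ}

def dirVec (r : ℝ) (i j : Fin n) (σ : Bool) : Fin n → ℝ :=
  if i = j then r • Pi.single i 1 else (r / √2) • (Pi.single i 1 + boolSign σ • Pi.single j 1)

lemma dirVec_self (r : ℝ) (i : Fin n) (σ : Bool) : dirVec r i i σ = r • Pi.single i 1 :=
  if_pos rfl

lemma dirVec_of_ne (r : ℝ) {i j : Fin n} (hij : i ≠ j) (σ : Bool) :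
    dirVec r i j σ = (r / √2) • (Pi.single i 1 + boolSign σ • Pi.single j 1) :=
  if_neg hij

lemma div_sqrt_two_mul_self (r : ℝ) : r / √2 * (r / √2) = r ^ 2 / 2 := by
  rw [div_mul_div_comm, Real.mul_self_sqrt zero_le_two, sq]

lemma eNorm_dirVec {r : ℝ} (hr : 0 ≤ r) (i j : Fin n) (σ : Bool) : eNorm (dirVec r i j σ) = r := by
  refine eNorm_eq_of_dotProduct_self hr ?_
  rcases eq_or_ne i j with rfl | hij
  · simp [dirVec_self, sq]
  · simp only [dirVec_of_ne r hij, smul_add, dotProduct_add, dotProduct_smul, dotProduct_single,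
      Pi.add_apply, Pi.smul_apply, Pi.single_eq_same, Pi.single_eq_of_ne hij,
      Pi.single_eq_of_ne hij.symm, smul_eq_mul, mul_one, mul_zero, add_zero, zero_add]
    linear_combination (1 + boolSign σ * boolSign σ) * div_sqrt_two_mul_self r +
      r ^ 2 / 2 * boolSign_mul_self σ

lemma sum_tracelessSq_dirVec {r : ℝ} (hr : 0 ≤ r) (i j : Fin n) :
    ∑ σ, tracelessSq (dirVec r i j σ) =
      tracelessSq (r • Pi.single i 1) + tracelessSq (r • Pi.single j 1) := by
  rcases eq_or_ne i j with rfl | hij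
  · simp [dirVec_self, two_smul]
  have hdiag (k : Fin n) : eNorm (r • Pi.single k 1 : Fin n → ℝ) = r := by
    simpa [dirVec_self] using eNorm_dirVec hr k k true
  ext1
  rw [Fintype.sum_bool, Submodule.coe_add, Submodule.coe_add,
    coe_tracelessSq_of_eNorm_eq (eNorm_dirVec hr i j true),
    coe_tracelessSq_of_eNorm_eq (eNorm_dirVec hr i j false), coe_tracelessSq_of_eNorm_eq (hdiag i),
    coe_tracelessSq_of_eNorm_eq (hdiag j), dirVec_of_ne r hij, dirVec_of_ne r hij]
  simp only [boolSign, if_true, Bool.false_eq_true, if_false, smul_vecMulVec, vecMulVec_smul,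
    add_vecMulVec, vecMulVec_add]
  linear_combination (norm := module) (2 * div_sqrt_two_mul_self r) •
    (vecMulVec (Pi.single i 1 : Fin n → ℝ) (Pi.single i 1) +
      vecMulVec (Pi.single j 1) (Pi.single j 1))

lemma coe_tracelessSq_dirVec_true_sub_false {r : ℝ} (hr : 0 ≤ r) {i j : Fin n} (hij : i ≠ j) :
    (tracelessSq (dirVec r i j true) - tracelessSq (dirVec r i j false) :
      Matrix (Fin n) (Fin n) ℝ) =
      r ^ 2 • (single i j 1 + single j i 1) := by
  rw [coe_tracelessSq_of_eNorm_eq (eNorm_dirVec hr i j true),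
    coe_tracelessSq_of_eNorm_eq (eNorm_dirVec hr i j false), dirVec_of_ne r hij, dirVec_of_ne r hij,
    single_eq_single_vecMulVec_single, single_eq_single_vecMulVec_single]
  simp only [boolSign, if_true, Bool.false_eq_true, if_false, smul_vecMulVec, vecMulVec_smul,
    add_vecMulVec, vecMulVec_add]
  linear_combination (norm := module) (2 * div_sqrt_two_mul_self r) •
    (vecMulVec (Pi.single i 1 : Fin n → ℝ) (Pi.single j 1) +
      vecMulVec (Pi.single j 1) (Pi.single i 1))

end Directions

section Spanning

variable {n : ℕ} {r : ℝ}

lemma span_tracelessSq_dirVec (hr : 0 < r) :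
    span ℝ (range fun p : Fin n × Fin n × Bool => tracelessSq (dirVec r p.1 p.2.1 p.2.2)) = ⊤ := by
  set Q := span ℝ (range fun p : Fin n × Fin n × Bool => tracelessSq (dirVec r p.1 p.2.1 p.2.2))
  have hgen (p : Fin n × Fin n × Bool) :
      (tracelessSq (dirVec r p.1 p.2.1 p.2.2) : Matrix (Fin n) (Fin n) ℝ) ∈ Q.map (M0 n).subtype :=
    mem_map_of_mem (subset_span (mem_range_self p))
  have hbasic (i j : Fin n) : r ^ 2 • (single i j 1 + single j i 1 -
      (if i = j then (2 / n : ℝ) else 0) • 1) ∈ Q.map (M0 n).subtype := by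
    rcases eq_or_ne i j with rfl | hij
    · convert smul_mem _ (2 : ℝ) (hgen (i, i, true)) using 1
      rw [dirVec_self, coe_tracelessSq_smul_single, if_pos rfl]
      module
    · convert sub_mem (hgen (i, j, true)) (hgen (i, j, false)) using 1
      rw [if_neg hij, zero_smul, sub_zero]
      exact (coe_tracelessSq_dirVec_true_sub_false hr.le hij).symm
  rw [eq_top_iff]
  rintro A -
  obtain ⟨B, hB, hBA⟩ : (A : Matrix (Fin n) (Fin n) ℝ) ∈ Q.map (M0 n).subtype := by
    rw [eq_sum_of_isSymm_of_trace_eq_zero A.2.1 A.2.2]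
    refine sum_mem fun i _ => sum_mem fun j _ => smul_mem _ _ ?_
    have h := smul_mem _ (r ^ 2)⁻¹ (hbasic i j)
    rwa [smul_smul, inv_mul_cancel₀ (by positivity), one_smul] at h
  rwa [← Subtype.ext hBA]

lemma span_dirVec_self (hr : r ≠ 0) : span ℝ (range fun i : Fin n => dirVec r i i true) = ⊤ := by
  simp_rw [dirVec_self]
  refine eq_top_iff.2 fun x _ => ?_
  rw [← Finset.univ_sum_single x]
  refine sum_mem fun i _ => ?_
  convert smul_mem _ (x i / r) (subset_span (mem_range_self i)) using 1
  rw [smul_smul, div_mul_cancel₀ _ hr, ← Pi.single_smul, smul_eq_mul, mul_one]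

end Spanning

section Family

variable {n : ℕ} {r : ℝ}

def kFamily (n : ℕ) (r : ℝ) :
    (Fin n × Fin n × Bool) × Bool × Bool → ℝ × (Fin n → ℝ) × (Fin n → ℝ) × M0 n :=
  fun q => kPoint (boolSign q.2.1) (boolSign q.2.2 • dirVec r q.1.1 q.1.2.1 q.1.2.2)

lemma kFamily_mem_Ksp (hr : 0 ≤ r) (q : (Fin n × Fin n × Bool) × Bool × Bool) :
    kFamily n r q ∈ Ksp n r :=
  kPoint_mem_Ksp (boolSign_eq_one_or_eq_neg_one _) (by rw [eNorm_boolSign_smul, eNorm_dirVec hr])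

lemma sum_kFamily (hr : 0 ≤ r) : ∑ q, kFamily n r q = 0 := by
  have hZ : ∑ p : Fin n × Fin n × Bool, tracelessSq (dirVec r p.1 p.2.1 p.2.2) = 0 := by
    simp only [Fintype.sum_prod_type, sum_tracelessSq_dirVec hr, Finset.sum_add_distrib,
      Finset.sum_const, Finset.card_univ, Fintype.card_fin, ← Finset.smul_sum,
      sum_tracelessSq_smul_single, smul_zero, add_zero]
  rw [Fintype.sum_prod_type]
  simp only [kFamily, sum_kPoint_signs]
  ext <;> simp [Prod.fst_sum, Prod.snd_sum, ← Finset.smul_sum, hZ]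

lemma span_kFamily [NeZero n] (hr : 0 < r) : span ℝ (range (kFamily n r)) = ⊤ := by
  set P := span ℝ (range (kFamily n r))
  have horbit (p : Fin n × Fin n × Bool) :=
    mem_of_kPoint_signs_mem (P := P) (v := dirVec r p.1 p.2.1 p.2.2)
      fun b s => subset_span ⟨(p, b, s), rfl⟩
  have h1 := (horbit (0, 0, true)).1
  have h2 := apply_mem_of_span_eq_top (LinearMap.inr ℝ ℝ _ ∘ₗ LinearMap.inl ℝ _ _)
    (span_dirVec_self hr.ne') (P := P) (by rintro _ ⟨i, rfl⟩; exact (horbit (i, i, true)).2.1)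
  have h3 := apply_mem_of_span_eq_top
    (LinearMap.inr ℝ ℝ _ ∘ₗ LinearMap.inr ℝ _ _ ∘ₗ LinearMap.inl ℝ _ _)
    (span_dirVec_self hr.ne') (P := P) (by rintro _ ⟨i, rfl⟩; exact (horbit (i, i, true)).2.2.1)
  have h4 := apply_mem_of_span_eq_top
    (LinearMap.inr ℝ ℝ _ ∘ₗ LinearMap.inr ℝ _ _ ∘ₗ LinearMap.inr ℝ _ _)
    (span_tracelessSq_dirVec hr) (P := P) (by rintro _ ⟨p, rfl⟩; exact (horbit p).2.2.2)
  refine eq_top_iff.2 fun ⟨a, x, y, z⟩ _ => ?_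
  have hsplit : ((a, x, y, z) : ℝ × (Fin n → ℝ) × (Fin n → ℝ) × M0 n) =
      a • ((1 : ℝ), (0 : Fin n → ℝ), (0 : Fin n → ℝ), (0 : M0 n)) + (0, x, 0, 0) + (0, 0, y, 0) +
        (0, 0, 0, z) := by
    simp
  rw [hsplit]
  exact add_mem (add_mem (add_mem (smul_mem _ _ h1) (h2 x)) (h3 y)) (h4 z)

end Family

theorem origin_mem_U (n : ℕ) (hn : 2 ≤ n) (r : ℝ) (hr : 0 < r) :
    ((0, 0, 0, 0), (0 : ℝ)) ∈ Usp n r ∧ (Usp n r).Nonempty ∧ IsOpen (Usp n r) := by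
  have : NeZero n := ⟨by omega⟩
  have hK : (0 : ℝ × (Fin n → ℝ) × (Fin n → ℝ) × M0 n) ∈ interior (convexHull ℝ (Ksp n r)) :=
    interior_mono (convexHull_mono (range_subset_iff.2 (kFamily_mem_Ksp hr.le)))
      (zero_mem_interior_convexHull_of_sum_eq_zero (span_kFamily hr) (sum_kFamily hr.le))
  have h0 : ((0, 0, 0, 0), (0 : ℝ)) ∈ Usp n r := by
    rw [Usp, interior_prod_eq, interior_Icc]
    exact ⟨hK, by norm_num, by norm_num⟩
  exact ⟨h0, ⟨_, h0⟩, isOpen_interior⟩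

end
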